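/- arXiv:1602.04684 — 3 statements merged into one kernel-verified Lean document; each statement's English description precedes it below -/
import Mathlib

section
/- There exists an absolute constant C > 0 such that for every k ≥ 0 and all x, x₁, t ∈ ℝ³ with ‖t − x₁‖ ≤ ‖x − x₁‖/2 and x ≠ x₁, one has ‖∇_x g(x,t) − ∇_x g(x,x₁)‖ ≤ C ‖t − x₁‖ (k²/d + k/d² + 1/d³), where d := ‖x − x₁‖. (This is the estimate |∇[g(x,t) − g(x,x₁)]| = O(ak²/d + ak/d² + a/d³) with a = ‖t − x₁‖.) -/
noncomputable section

open Real MeasureTheory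
open scoped BigOperators RealInnerProductSpace

/-- ℝ³ with the Euclidean norm. -/
abbrev R3 : Type := EuclideanSpace ℝ (Fin 3)

/-- ℂ³ (componentwise). -/
abbrev C3 : Type := Fin 3 → ℂ

/-- The j-th partial derivative of a complex-valued function on ℝ³. -/
def pd (j : Fin 3) (f : R3 → ℂ) (x : R3) : ℂ :=
  fderiv ℝ f x (EuclideanSpace.single j 1)

/-- curl F = (∂₂F₃ − ∂₃F₂, ∂₃F₁ − ∂₁F₃, ∂₁F₂ − ∂₂F₁) (0-indexed). -/
def curl (F : R3 → C3) (x : R3) : C3 :=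
  ![pd 1 (fun y => F y 2) x - pd 2 (fun y => F y 1) x,
    pd 2 (fun y => F y 0) x - pd 0 (fun y => F y 2) x,
    pd 0 (fun y => F y 1) x - pd 1 (fun y => F y 0) x]

/-- The gradient (∂₁f, ∂₂f, ∂₃f) as a vector in ℂ³. -/
def grad (f : R3 → ℂ) (x : R3) : C3 := fun j => pd j f x

/-- The outgoing Green's function of the Helmholtz operator with wave number k. -/
def g (k : ℝ) (x y : R3) : ℂ :=
  Complex.exp (Complex.I * k * ‖x - y‖) / (4 * Real.pi * ‖x - y‖)

/-- The Euclidean norm on ℂ³. -/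
def norm3 (v : C3) : ℝ := ‖(WithLp.equiv 2 (Fin 3 → ℂ)).symm v‖


/-! Away from the pole, `∇ₓ g(x, y) = ψ(‖x - y‖) (x - y)` with `ψ(r) = e^{ikr} (ikr - 1) / (4πr³)`.
With `r = ‖x - t‖` and `d = ‖x - x₁‖` the difference of gradients splits as
`ψ(r) (x₁ - t) + (ψ(r) - ψ(d)) (x - x₁)`. The hypothesis `‖t - x₁‖ ≤ d / 2` keeps `r` and `d`
above `d / 2`, where `|ψ| ≤ k / (d/2)² + 1 / (d/2)³`, and the mean value theorem with
`|ψ'(s)| ≤ (k²s² + 3ks + 3) / s⁴` bounds `|ψ(r) - ψ(d)|` by a multiple of `|r - d| ≤ ‖t - x₁‖`. -/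

theorem hasFDerivAt_norm {E : Type*} [NormedAddCommGroup E] [InnerProductSpace ℝ E] {v : E}
    (hv : v ≠ 0) : HasFDerivAt (‖·‖) (‖v‖⁻¹ • innerSL ℝ v) v := by
  have hsqrt := Real.hasDerivAt_sqrt (pow_ne_zero 2 (norm_ne_zero_iff.2 hv))
  have h := hsqrt.comp_hasFDerivAt v (hasStrictFDerivAt_norm_sq v).hasFDerivAt
  have hfun : (Real.sqrt ∘ fun w : E => ‖w‖ ^ 2) = (‖·‖) := by
    funext w
    simp
  rw [hfun, Real.sqrt_sq (norm_nonneg v)] at h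
  refine h.congr_fderiv ?_
  ext w
  simp [field]

def greenRadial (k r : ℝ) : ℂ :=
  Complex.exp (Complex.I * k * r) / (4 * π * r)

def greenGradRadial (k r : ℝ) : ℂ :=
  Complex.exp (Complex.I * k * r) * (Complex.I * k * r - 1) / (4 * π * r ^ 3)

theorem g_eq_greenRadial (k : ℝ) (x y : R3) : g k x y = greenRadial k ‖x - y‖ := rfl

theorem hasDerivAt_cexp_I_mul (k r : ℝ) :
    HasDerivAt (fun s : ℝ => Complex.exp (Complex.I * k * s))
      (Complex.exp (Complex.I * k * r) * (Complex.I * k)) r := by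
  simpa using ((hasDerivAt_id r).ofReal_comp.const_mul (Complex.I * k)).cexp

theorem hasDerivAt_greenRadial (k : ℝ) {r : ℝ} (hr : r ≠ 0) :
    HasDerivAt (greenRadial k) (r * greenGradRadial k r) r := by
  have hden : HasDerivAt (fun s : ℝ => 4 * π * (s : ℂ)) (4 * π) r := by
    simpa using (hasDerivAt_id r).ofReal_comp.const_mul (4 * (π : ℂ))
  refine ((hasDerivAt_cexp_I_mul k r).div hden (by simp [hr, Real.pi_ne_zero])).congr_deriv ?_
  rw [greenGradRadial]
  field_simp

theorem hasDerivAt_greenGradRadial (k : ℝ) {r : ℝ} (hr : r ≠ 0) :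
    HasDerivAt (greenGradRadial k)
      (Complex.exp (Complex.I * k * r) * (3 - 3 * Complex.I * k * r - k ^ 2 * r ^ 2)
        / (4 * π * r ^ 4)) r := by
  have hlin : HasDerivAt (fun s : ℝ => Complex.I * k * s - 1) (Complex.I * k) r := by
    simpa using ((hasDerivAt_id r).ofReal_comp.const_mul (Complex.I * k)).sub_const 1
  have hden : HasDerivAt (fun s : ℝ => 4 * π * (s : ℂ) ^ 3) (4 * π * (3 * r ^ 2) : ℂ) r := by
    simpa using ((hasDerivAt_id r).ofReal_comp.pow 3).const_mul (4 * (π : ℂ))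
  refine (((hasDerivAt_cexp_I_mul k r).mul hlin).div hden
    (by simp [hr, Real.pi_ne_zero])).congr_deriv ?_
  simp only [Pi.mul_apply]
  field_simp
  ring_nf
  simp only [Complex.I_sq]
  ring

theorem grad_g_eq (k : ℝ) {x y : R3} (h : x ≠ y) :
    grad (fun w => g k w y) x = fun j => greenGradRadial k ‖x - y‖ * ((x - y) j : ℂ) := by
  have hv : x - y ≠ 0 := sub_ne_zero.mpr h
  have hr : ‖x - y‖ ≠ 0 := norm_ne_zero_iff.mpr hv
  have hnorm : HasFDerivAt (fun w : R3 => ‖w - y‖) (‖x - y‖⁻¹ • innerSL ℝ (x - y)) x := by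
    have := (hasFDerivAt_norm hv).comp x ((hasFDerivAt_id x).sub_const y)
    rwa [ContinuousLinearMap.comp_id] at this
  have hg := (hasDerivAt_greenRadial k hr).hasFDerivAt.comp x hnorm
  funext j
  simp only [grad, pd, g_eq_greenRadial]
  rw [show (fun w => greenRadial k ‖w - y‖) = greenRadial k ∘ fun w => ‖w - y‖ from rfl, hg.fderiv]
  have hr' : (‖x - y‖ : ℂ) ≠ 0 := Complex.ofReal_ne_zero.2 hr
  simp [EuclideanSpace.inner_single_right, field]

theorem norm_cexp_I_mul_mul_div_le (k : ℝ) {r : ℝ} (hr : 0 < r) (z : ℂ) (n : ℕ) :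
    ‖Complex.exp (Complex.I * k * r) * z / (4 * π * r ^ n)‖ ≤ ‖z‖ / r ^ n := by
  have h4pi : 1 ≤ 4 * π := by linarith [Real.pi_gt_three]
  rw [mul_assoc, ← Complex.ofReal_mul, norm_div, norm_mul, Complex.norm_exp_I_mul_ofReal, one_mul]
  norm_cast
  rw [Real.norm_of_nonneg (by positivity)]
  calc ‖z‖ / (4 * π * r ^ n) ≤ ‖z‖ / (1 * r ^ n) := by gcongr
    _ = ‖z‖ / r ^ n := by rw [one_mul]

section bounds

variable {k c r : ℝ}

theorem norm_greenGradRadial_le (hk : 0 ≤ k) (hc : 0 < c) (hcr : c ≤ r) :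
    ‖greenGradRadial k r‖ ≤ k / c ^ 2 + 1 / c ^ 3 := by
  have hr : 0 < r := hc.trans_le hcr
  have hnum : ‖Complex.I * k * r - 1‖ ≤ k * r + 1 := by
    refine (norm_sub_le _ _).trans_eq ?_
    simp [abs_of_nonneg hk, abs_of_nonneg hr.le]
  calc ‖greenGradRadial k r‖ ≤ (k * r + 1) / r ^ 3 :=
        (norm_cexp_I_mul_mul_div_le k hr _ 3).trans (by gcongr)
    _ = k / r ^ 2 + 1 / r ^ 3 := by field_simp
    _ ≤ k / c ^ 2 + 1 / c ^ 3 := by gcongr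

theorem norm_deriv_greenGradRadial_le (hk : 0 ≤ k) (hc : 0 < c) (hcr : c ≤ r) :
    ‖Complex.exp (Complex.I * k * r) * (3 - 3 * Complex.I * k * r - k ^ 2 * r ^ 2)
        / (4 * π * r ^ 4)‖ ≤ k ^ 2 / c ^ 2 + 3 * k / c ^ 3 + 3 / c ^ 4 := by
  have hr : 0 < r := hc.trans_le hcr
  have hnum : ‖3 - 3 * Complex.I * k * r - k ^ 2 * r ^ 2‖ ≤ 3 + 3 * k * r + k ^ 2 * r ^ 2 := by
    refine (norm_sub_le_of_le (norm_sub_le _ _) le_rfl).trans_eq ?_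
    norm_cast
    simp [abs_of_nonneg hk, abs_of_nonneg hr.le]
  calc _ ≤ (3 + 3 * k * r + k ^ 2 * r ^ 2) / r ^ 4 :=
        (norm_cexp_I_mul_mul_div_le k hr _ 4).trans (by gcongr)
    _ = k ^ 2 / r ^ 2 + 3 * k / r ^ 3 + 3 / r ^ 4 := by field_simp; ring
    _ ≤ k ^ 2 / c ^ 2 + 3 * k / c ^ 3 + 3 / c ^ 4 := by gcongr

theorem norm_greenGradRadial_sub_le (hk : 0 ≤ k) (hc : 0 < c) (hcr : c ≤ r) {s : ℝ}
    (hcs : c ≤ s) :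
    ‖greenGradRadial k r - greenGradRadial k s‖
      ≤ (k ^ 2 / c ^ 2 + 3 * k / c ^ 3 + 3 / c ^ 4) * |r - s| :=
  (convex_Ici c).norm_image_sub_le_of_norm_hasDerivWithin_le
    (fun _ hu => (hasDerivAt_greenGradRadial k (hc.trans_le hu).ne').hasDerivWithinAt)
    (fun _ hu => norm_deriv_greenGradRadial_le hk hc hu) hcs hcr

end bounds

theorem norm3_add_le (u w : C3) : norm3 (u + w) ≤ norm3 u + norm3 w :=
  norm_add_le _ _

theorem norm3_mul_ofReal (c : ℂ) (v : R3) : norm3 (fun j => c * (v j : ℂ)) = ‖c‖ * ‖v‖ := by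
  simp only [norm3, EuclideanSpace.norm_eq, WithLp.equiv_symm_apply, norm_mul,
    Complex.norm_real, mul_pow, ← Finset.mul_sum]
  rw [Real.sqrt_mul (by positivity), Real.sqrt_sq (norm_nonneg c)]

theorem grad_g_sub_grad_g (k : ℝ) {x x₁ t : R3} (hxt : x ≠ t) (hxx₁ : x ≠ x₁) :
    grad (fun w => g k w t) x - grad (fun w => g k w x₁) x
      = (fun j => greenGradRadial k ‖x - t‖ * ((x₁ - t) j : ℂ))
        + fun j => (greenGradRadial k ‖x - t‖ - greenGradRadial k ‖x - x₁‖) * ((x - x₁) j : ℂ) := by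
  rw [grad_g_eq k hxt, grad_g_eq k hxx₁]
  funext j
  simp only [Pi.sub_apply, Pi.add_apply, PiLp.sub_apply, Complex.ofReal_sub]
  ring

theorem half_norm_sub_le_norm_sub {E : Type*} [SeminormedAddCommGroup E] {x x₁ t : E}
    (h : ‖t - x₁‖ ≤ ‖x - x₁‖ / 2) : ‖x - x₁‖ / 2 ≤ ‖x - t‖ := by
  linarith [norm_sub_le_norm_sub_add_norm_sub x t x₁]

theorem norm3_grad_g_sub_le {k : ℝ} (hk : 0 ≤ k) {x x₁ t : R3}
    (ht : ‖t - x₁‖ ≤ ‖x - x₁‖ / 2) (hxx₁ : x ≠ x₁) :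
    norm3 (grad (fun w => g k w t) x - grad (fun w => g k w x₁) x)
      ≤ (k / (‖x - x₁‖ / 2) ^ 2 + 1 / (‖x - x₁‖ / 2) ^ 3) * ‖t - x₁‖
        + (k ^ 2 / (‖x - x₁‖ / 2) ^ 2 + 3 * k / (‖x - x₁‖ / 2) ^ 3 + 3 / (‖x - x₁‖ / 2) ^ 4)
          * ‖t - x₁‖ * ‖x - x₁‖ := by
  have hc : 0 < ‖x - x₁‖ / 2 := half_pos (norm_pos_iff.2 (sub_ne_zero.2 hxx₁))
  have hct := half_norm_sub_le_norm_sub ht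
  have hxt : x ≠ t := sub_ne_zero.1 (norm_pos_iff.1 (hc.trans_le hct))
  have hdist : |‖x - t‖ - ‖x - x₁‖| ≤ ‖t - x₁‖ := by
    simpa [norm_sub_rev x₁ t] using abs_norm_sub_norm_le (x - t) (x - x₁)
  rw [grad_g_sub_grad_g k hxt hxx₁]
  refine (norm3_add_le _ _).trans ?_
  rw [norm3_mul_ofReal, norm3_mul_ofReal, norm_sub_rev x₁ t]
  gcongr
  · exact norm_greenGradRadial_le hk hc hct
  · exact (norm_greenGradRadial_sub_le hk hc hct (by linarith)).trans (by gcongr)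

theorem half_dist_bound_le {k a d : ℝ} (hk : 0 ≤ k) (ha : 0 ≤ a) (hd : 0 < d) :
    (k / (d / 2) ^ 2 + 1 / (d / 2) ^ 3) * a
        + (k ^ 2 / (d / 2) ^ 2 + 3 * k / (d / 2) ^ 3 + 3 / (d / 2) ^ 4) * a * d
      ≤ 56 * a * (k ^ 2 / d + k / d ^ 2 + 1 / d ^ 3) := by
  have hgap : 56 * a * (k ^ 2 / d + k / d ^ 2 + 1 / d ^ 3)
      - ((k / (d / 2) ^ 2 + 1 / (d / 2) ^ 3) * a
        + (k ^ 2 / (d / 2) ^ 2 + 3 * k / (d / 2) ^ 3 + 3 / (d / 2) ^ 4) * a * d)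
      = a * (52 * k ^ 2 / d + 28 * k / d ^ 2) := by
    field_simp
    ring
  have : 0 ≤ a * (52 * k ^ 2 / d + 28 * k / d ^ 2) := by positivity
  linarith

/-- there is an absolute constant C > 0 with
‖∇_x g(x,t) − ∇_x g(x,x₁)‖ ≤ C ‖t−x₁‖ (k²/d + k/d² + 1/d³), d = ‖x−x₁‖,
whenever k ≥ 0, ‖t−x₁‖ ≤ ‖x−x₁‖/2 and x ≠ x₁. -/
theorem green_grad_diff_bound :
    ∃ C > 0, ∀ (k : ℝ), 0 ≤ k → ∀ x x₁ t : R3,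
      ‖t - x₁‖ ≤ ‖x - x₁‖ / 2 → x ≠ x₁ →
      norm3 (grad (fun w => g k w t) x - grad (fun w => g k w x₁) x)
        ≤ C * ‖t - x₁‖ *
            (k ^ 2 / ‖x - x₁‖ + k / ‖x - x₁‖ ^ 2 + 1 / ‖x - x₁‖ ^ 3) :=
  ⟨56, by norm_num, fun _ hk _ _ _ ht hxx₁ =>
    (norm3_grad_g_sub_le hk ht hxx₁).trans <|
      half_dist_bound_le hk (norm_nonneg _) (norm_pos_iff.2 (sub_ne_zero.2 hxx₁))⟩
end
end

section
/- Let a > 0, t := (0,0,a), s(θ,φ) := a(cos θ sin φ, sin θ sin φ, cos φ), and N(θ,φ) := s(θ,φ)/a. Define Γ_{pq} := −(1/(4π)) ∫₀^{2π} ∫₀^{π} (s_p(θ,φ) − t_p) N_q(θ,φ) / ‖s(θ,φ) − t‖³ · a² sin φ dφ dθ for 1 ≤ p,q ≤ 3. Then Γ_{11} = −1/3 and Γ_{22} = −1/3. -/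
noncomputable section

open Real MeasureTheory
open scoped BigOperators RealInnerProductSpace

/-- Spherical parametrization s(θ,φ) of the sphere of radius a centered at the origin. -/
def sph (a θ φ : ℝ) : R3 :=
  WithLp.toLp 2 ![a * (Real.cos θ * Real.sin φ), a * (Real.sin θ * Real.sin φ), a * Real.cos φ]

/-- The north pole t = (0,0,a). -/
def tpole (a : ℝ) : R3 := WithLp.toLp 2 ![0, 0, a]

/-- The matrix Γ_{pq} = ∫_S (∂g₀(s,t)/∂s_p) N_q(s) ds for the sphere of radius a
centered at the origin, with t = (0,0,a), N = s/a, in spherical coordinates. -/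
def Gam (a : ℝ) (p q : Fin 3) : ℝ :=
  -(1 / (4 * Real.pi)) *
    ∫ θ in (0:ℝ)..(2 * Real.pi), ∫ φ in (0:ℝ)..Real.pi,
      (sph a θ φ p - tpole a p) * ((a⁻¹ • sph a θ φ) q) /
          ‖sph a θ φ - tpole a‖ ^ 3 * a ^ 2 * Real.sin φ

/-!
Near the pole the distance is `‖s - t‖ = 2a sin(φ/2)`, while for a horizontal index `p` the
numerator carries `a sin φ · sin φ · a² sin φ`. Since `sin φ = 2 sin(φ/2) cos(φ/2)`, the cube of
the distance cancels and the `φ`-integrand of `Γ_pp` is the smooth function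
`c(θ)² cos³(φ/2)` (with `c = cos` for `p = 1`, `c = sin` for `p = 2`), whose integral is `4/3`.
The `θ`-integral of `c²` over a period is `π`, giving `Γ_pp = -(1/(4π)) · (4/3) · π = -1/3`.
-/

lemma norm_sph_sub_tpole {a : ℝ} (ha : 0 ≤ a) (θ : ℝ) {φ : ℝ} (hφ₀ : 0 ≤ φ) (hφ : φ ≤ π) :
    ‖sph a θ φ - tpole a‖ = 2 * a * sin (φ / 2) := by
  have hsin_half : 0 ≤ sin (φ / 2) := sin_nonneg_of_nonneg_of_le_pi (by linarith) (by linarith)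
  have hcos : cos φ = 1 - 2 * sin (φ / 2) ^ 2 := by
    nth_rewrite 1 [show φ = 2 * (φ / 2) by ring]
    linarith [cos_two_mul' (φ / 2), sin_sq_add_cos_sq (φ / 2)]
  have hsq : ∑ i, ‖(sph a θ φ - tpole a) i‖ ^ 2 = (2 * a * sin (φ / 2)) ^ 2 := by
    simp only [Fin.sum_univ_three, PiLp.sub_apply, Real.norm_eq_abs, sq_abs, sph, tpole,
      Matrix.cons_val_zero, Matrix.cons_val_one, Matrix.cons_val_two, Matrix.head_cons,
      Matrix.tail_cons]
    linear_combination a ^ 2 * sin φ ^ 2 * sin_sq_add_cos_sq θ + a ^ 2 * sin_sq_add_cos_sq φ -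
      2 * a ^ 2 * hcos
  rw [EuclideanSpace.norm_eq, hsq, sqrt_sq (by positivity)]

lemma integral_cos_half_pow_three : ∫ φ in (0 : ℝ)..π, cos (φ / 2) ^ 3 = 4 / 3 := by
  rw [intervalIntegral.integral_comp_div (fun x => cos x ^ 3) two_ne_zero, integral_cos_pow_three]
  norm_num

lemma horizontal_integrand_eq {a : ℝ} (ha : 0 < a) (θ c : ℝ) {φ : ℝ} (hφ₀ : 0 < φ) (hφ : φ ≤ π) :
    a * (c * sin φ) * (a⁻¹ * (a * (c * sin φ))) / ‖sph a θ φ - tpole a‖ ^ 3 * a ^ 2 * sin φ =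
      c ^ 2 * cos (φ / 2) ^ 3 := by
  have hsin_half : 0 < sin (φ / 2) := sin_pos_of_pos_of_lt_pi (by linarith) (by linarith)
  have hsin : sin φ = 2 * sin (φ / 2) * cos (φ / 2) := by
    nth_rewrite 1 [show φ = 2 * (φ / 2) by ring]
    exact sin_two_mul (φ / 2)
  rw [norm_sph_sub_tpole ha.le θ hφ₀.le hφ, hsin]
  field_simp

lemma Gam_eq_of_horizontal {a : ℝ} (ha : 0 < a) (p : Fin 3) (c : ℝ → ℝ)
    (hsph : ∀ θ φ, sph a θ φ p = a * (c θ * sin φ)) (htpole : tpole a p = 0) :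
    Gam a p p = -(1 / (4 * π)) * ∫ θ in (0 : ℝ)..2 * π, 4 / 3 * c θ ^ 2 := by
  unfold Gam
  congr 1
  refine intervalIntegral.integral_congr fun θ _ => ?_
  simp only [PiLp.smul_apply, smul_eq_mul, hsph, htpole, sub_zero]
  calc ∫ φ in (0 : ℝ)..π, a * (c θ * sin φ) * (a⁻¹ * (a * (c θ * sin φ))) /
          ‖sph a θ φ - tpole a‖ ^ 3 * a ^ 2 * sin φ
      = ∫ φ in (0 : ℝ)..π, c θ ^ 2 * cos (φ / 2) ^ 3 := by
        refine intervalIntegral.integral_congr_ae (Filter.Eventually.of_forall fun φ hφ => ?_)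
        rw [Set.uIoc_of_le pi_pos.le] at hφ
        exact horizontal_integrand_eq ha θ (c θ) hφ.1 hφ.2
    _ = 4 / 3 * c θ ^ 2 := by
        rw [intervalIntegral.integral_const_mul, integral_cos_half_pow_three, mul_comm]

/-- Γ₁₁ = −1/3 and Γ₂₂ = −1/3 for the sphere of radius a > 0. -/
theorem Gamma_diag_first_two (a : ℝ) (ha : 0 < a) :
    Gam a 0 0 = -(1 / 3) ∧ Gam a 1 1 = -(1 / 3) := by
  constructor
  · rw [Gam_eq_of_horizontal ha 0 cos (fun _ _ => rfl) rfl, intervalIntegral.integral_const_mul,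
      integral_cos_sq]
    simp only [cos_two_pi, sin_two_pi, cos_zero, sin_zero]
    field_simp
    ring
  · rw [Gam_eq_of_horizontal ha 1 sin (fun _ _ => rfl) rfl, intervalIntegral.integral_const_mul,
      integral_sin_sq]
    simp only [cos_two_pi, sin_two_pi, cos_zero, sin_zero]
    field_simp
    ring
end
end

section
/- Let k ≥ 0 and y ∈ ℝ³. There exists a constant C > 0 (depending on k and ‖y‖) such that for every x ∈ ℝ³ with ‖x‖ ≥ 2‖y‖ + 1, |⟨x/‖x‖, ∇_x g(x,y)⟩ − i k g(x,y)| ≤ C/‖x‖², where the scalar product on ℂ³ is the bilinear extension of that on ℝ³. (Hence x ↦ g(x,y) satisfies the Sommerfeld radiation condition ∂g/∂r − ikg = o(1/r) as r = ‖x‖ → ∞.) -/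
/-!
The Green's function is radial about `y`: `g k x y = φ ‖x - y‖` with `φ t = e^{ikt} / (4πt)`.
Hence its derivative in the direction `x̂ = x / ‖x‖` is `(s / r) φ'(r)`, where `r = ‖x - y‖` and
`s = ⟪x - y, x̂⟫`, and since `φ'(r) = e^{ikr} (ikr - 1) / (4πr²)` the defect is
`e^{ikr} (ikr (s - r) - s) / (4πr³)`. Cauchy–Schwarz gives `|s| ≤ r`, and `s - r` is small because
`s = ‖x‖ - ⟪y, x̂⟫` while `|‖x‖ - r| ≤ ‖y‖`; so the defect is at most `(1 + 2|k|‖y‖) / (4πr²)`,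
and `r ≥ ‖x‖ / 2` finishes the proof.
-/

noncomputable section

open Real MeasureTheory
open scoped BigOperators RealInnerProductSpace

section RealInnerProductSpace

variable {E : Type*} [NormedAddCommGroup E] [InnerProductSpace ℝ E]

theorem hasFDerivAt_norm_of_ne_zero {x : E} (hx : x ≠ 0) :
    HasFDerivAt (‖·‖) (‖x‖⁻¹ • innerSL ℝ x) x := by
  have h := (hasStrictFDerivAt_norm_sq x).hasFDerivAt.sqrt (by positivity)
  simp only [Real.sqrt_sq (norm_nonneg _)] at h
  convert h using 1
  ext v
  simp only [smul_apply, coe_innerSL_apply, smul_eq_mul, nsmul_eq_mul, Nat.cast_ofNat]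
  field_simp

theorem HasDerivAt.hasFDerivAt_comp_norm_sub {F : Type*} [NormedAddCommGroup F]
    [NormedSpace ℝ F] {f : ℝ → F} {f' : F} {x y : E} (hxy : x ≠ y)
    (hf : HasDerivAt f f' ‖x - y‖) :
    HasFDerivAt (fun w => f ‖w - y‖) ((‖x - y‖⁻¹ • innerSL ℝ (x - y)).smulRight f') x :=
  (hf.hasFDerivAt.comp x <| (hasFDerivAt_norm_of_ne_zero (sub_ne_zero.mpr hxy)).comp x
    ((hasFDerivAt_id x).sub_const y)).congr_fderiv (by ext; simp [mul_smul, sub_smul])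

theorem norm_inv_norm_smul_le_one (x : E) : ‖‖x‖⁻¹ • x‖ ≤ 1 := by
  rw [norm_smul, norm_inv, norm_norm]
  exact inv_mul_le_one_of_le₀ le_rfl (norm_nonneg x)

theorem abs_real_inner_inv_norm_smul_le (x z : E) : |⟪z, ‖x‖⁻¹ • x⟫| ≤ ‖z‖ :=
  (abs_real_inner_le_norm _ _).trans <|
    mul_le_of_le_one_right (norm_nonneg z) (norm_inv_norm_smul_le_one x)

theorem abs_real_inner_sub_inv_norm_smul_sub_norm_le (x y : E) :
    |⟪x - y, ‖x‖⁻¹ • x⟫ - ‖x - y‖| ≤ 2 * ‖y‖ := by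
  have hxx : ⟪x, ‖x‖⁻¹ • x⟫ = ‖x‖ := by
    rw [real_inner_smul_right, real_inner_self_eq_norm_sq]
    rcases eq_or_ne ‖x‖ 0 with h | h <;> field_simp [h]
  have hy : |⟪y, ‖x‖⁻¹ • x⟫| ≤ ‖y‖ := abs_real_inner_inv_norm_smul_le x y
  have hx : |‖x‖ - ‖x - y‖| ≤ ‖y‖ := by
    simpa using abs_norm_sub_norm_le x (x - y)
  rw [inner_sub_left, hxx]
  calc |‖x‖ - ⟪y, ‖x‖⁻¹ • x⟫ - ‖x - y‖| = |(‖x‖ - ‖x - y‖) - ⟪y, ‖x‖⁻¹ • x⟫| := by ring_nf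
    _ ≤ |‖x‖ - ‖x - y‖| + |⟪y, ‖x‖⁻¹ • x⟫| := abs_sub _ _
    _ ≤ 2 * ‖y‖ := by linarith

end RealInnerProductSpace

theorem EuclideanSpace.sum_smul_apply_single {ι 𝕜 F : Type*} [Fintype ι] [DecidableEq ι]
    [RCLike 𝕜] [AddCommGroup F] [Module 𝕜 F] [TopologicalSpace F]
    (L : EuclideanSpace 𝕜 ι →L[𝕜] F) (v : EuclideanSpace 𝕜 ι) :
    ∑ j, v j • L (EuclideanSpace.single j 1) = L v := by
  conv_rhs => rw [← (EuclideanSpace.basisFun ι 𝕜).sum_repr v]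
  simp [map_sum, map_smul]

theorem sum_ofReal_mul_grad (f : R3 → ℂ) (x v : R3) :
    ∑ j, (v j : ℂ) * grad f x j = fderiv ℝ f x v := by
  simp only [grad, pd, ← Complex.real_smul]
  exact EuclideanSpace.sum_smul_apply_single _ v

def helmholtzProfile (k t : ℝ) : ℂ := Complex.exp (Complex.I * k * t) / (4 * π * t)

def helmholtzProfileDeriv (k t : ℝ) : ℂ :=
  Complex.exp (Complex.I * k * t) * (Complex.I * k * t - 1) / (4 * π * t ^ 2)

theorem g_eq_helmholtzProfile (k : ℝ) (x y : R3) : g k x y = helmholtzProfile k ‖x - y‖ := rfl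

theorem hasDerivAt_helmholtzProfile (k : ℝ) {r : ℝ} (hr : r ≠ 0) :
    HasDerivAt (helmholtzProfile k) (helmholtzProfileDeriv k r) r := by
  have hid : HasDerivAt (fun t : ℝ => (t : ℂ)) 1 r := (hasDerivAt_id r).ofReal_comp
  have hnum := (hid.const_mul (Complex.I * k)).cexp
  have hden := hid.const_mul (4 * π : ℂ)
  have hπ : (π : ℂ) ≠ 0 := Complex.ofReal_ne_zero.mpr pi_ne_zero
  have hrC : (r : ℂ) ≠ 0 := Complex.ofReal_ne_zero.mpr hr
  exact (hnum.div hden (by simp [hπ, hrC])).congr_deriv (by rw [helmholtzProfileDeriv]; field_simp)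

theorem norm_radiation_defect_helmholtzProfile_le (k s : ℝ) {r : ℝ} (hr : 0 < r) :
    ‖((s / r : ℝ) : ℂ) * helmholtzProfileDeriv k r - Complex.I * k * helmholtzProfile k r‖ ≤ (|s| + |k| * r * |s - r|) / (4 * π * r ^ 3) := by
  have hπ : (π : ℂ) ≠ 0 := Complex.ofReal_ne_zero.mpr pi_ne_zero
  have hrC : (r : ℂ) ≠ 0 := Complex.ofReal_ne_zero.mpr hr.ne'
  have hdefect : ((s / r : ℝ) : ℂ) * helmholtzProfileDeriv k r - Complex.I * k * helmholtzProfile k r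
      = Complex.exp (Complex.I * k * r) * (Complex.I * ((k * r * (s - r) : ℝ) : ℂ) - s)
        / ((4 * π * r ^ 3 : ℝ) : ℂ) := by
    simp only [helmholtzProfile, helmholtzProfileDeriv]
    push_cast
    field_simp
    ring
  have hexp : ‖Complex.exp (Complex.I * k * r)‖ = 1 := by
    rw [Complex.norm_exp]; simp
  rw [hdefect, norm_div, norm_mul, hexp, one_mul, Complex.norm_real,
    Real.norm_of_nonneg (by positivity)]
  gcongr
  calc ‖Complex.I * ((k * r * (s - r) : ℝ) : ℂ) - s‖
      ≤ ‖Complex.I * ((k * r * (s - r) : ℝ) : ℂ)‖ + ‖(s : ℂ)‖ := norm_sub_le _ _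
    _ = |s| + |k| * r * |s - r| := by
      rw [add_comm, norm_mul, Complex.norm_I, one_mul, Complex.norm_real, Complex.norm_real,
        Real.norm_eq_abs, Real.norm_eq_abs, abs_mul, abs_mul, abs_of_pos hr]

theorem green_radiation_condition_general (k : ℝ) (y : R3) :
    ∃ C > 0, ∀ x : R3, 2 * ‖y‖ + 1 ≤ ‖x‖ →
      ‖(∑ j, ((x j / ‖x‖ : ℝ) : ℂ) * grad (fun w => g k w y) x j)
          - Complex.I * k * g k x y‖ ≤ C / ‖x‖ ^ 2 := by
  refine ⟨(1 + 2 * |k| * ‖y‖) / π, by positivity, fun x hx => ?_⟩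
  set r := ‖x - y‖
  have hxr : ‖x‖ ≤ 2 * r := by linarith [norm_sub_norm_le x y, norm_nonneg y]
  have hx0 : 0 < ‖x‖ := by linarith [norm_nonneg y]
  have hr : 0 < r := by linarith
  have hxy : x ≠ y := sub_ne_zero.mp (norm_pos_iff.mp hr)
  set s := ⟪x - y, ‖x‖⁻¹ • x⟫
  have hG := (hasDerivAt_helmholtzProfile k hr.ne').hasFDerivAt_comp_norm_sub hxy
  have hsum : ∑ j, ((x j / ‖x‖ : ℝ) : ℂ) * grad (fun w => g k w y) x j
      = ((s / r : ℝ) : ℂ) * helmholtzProfileDeriv k r := by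
    have hv : ∀ j, x j / ‖x‖ = (‖x‖⁻¹ • x) j := fun j => by simp [div_eq_inv_mul]
    simp_rw [hv, sum_ofReal_mul_grad, g_eq_helmholtzProfile, hG.fderiv]
    rw [ContinuousLinearMap.smulRight_apply, smul_apply, innerSL_apply_apply,
      smul_eq_mul, Complex.real_smul, mul_comm ‖x - y‖⁻¹, ← div_eq_mul_inv]
  rw [hsum, g_eq_helmholtzProfile]
  calc _ ≤ (|s| + |k| * r * |s - r|) / (4 * π * r ^ 3) :=
        norm_radiation_defect_helmholtzProfile_le k s hr
    _ ≤ (r + |k| * r * (2 * ‖y‖)) / (4 * π * r ^ 3) := by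
      gcongr
      · exact abs_real_inner_inv_norm_smul_le x (x - y)
      · exact abs_real_inner_sub_inv_norm_smul_sub_norm_le x y
    _ = (1 + 2 * |k| * ‖y‖) / π / (2 * r) ^ 2 := by field_simp; ring
    _ ≤ (1 + 2 * |k| * ‖y‖) / π / ‖x‖ ^ 2 := by gcongr

/-- the Green's function satisfies the Sommerfeld radiation condition:
|⟨x/‖x‖, ∇_x g(x,y)⟩ − ik g(x,y)| ≤ C/‖x‖² for ‖x‖ ≥ 2‖y‖ + 1. -/
theorem green_radiation_condition (k : ℝ) (hk : 0 ≤ k) (y : R3) :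
    ∃ C > 0, ∀ x : R3, 2 * ‖y‖ + 1 ≤ ‖x‖ →
      ‖(∑ j, ((x j / ‖x‖ : ℝ) : ℂ) * grad (fun w => g k w y) x j)
          - Complex.I * k * g k x y‖ ≤ C / ‖x‖ ^ 2 :=
  green_radiation_condition_general k y
end
end
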